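/- For every natural number n ≥ 9, in the Bob-start 3-coloring game on the 4×n cylinder graph Bob has a winning strategy; consequently χ_g^B(P_4 □ C_n) ≥ 4. -/

import Mathlib

open SimpleGraph

/-- A move coloring vertex `v` with color `col` is valid for the partial coloring `c`
if `v` is uncolored and no neighbor of `v` already has color `col`. -/
def validMove {V : Type*} (G : SimpleGraph V) {k : ℕ} (c : V → Option (Fin k))
    (v : V) (col : Fin k) : Prop :=
  c v = none ∧ ∀ u, G.Adj u v → c u ≠ some col

/-- All vertices are colored. -/
def allColored {V : Type*} {k : ℕ} (c : V → Option (Fin k)) : Prop :=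
  ∀ v, c v ≠ none

/-- `AliceWins G k turn c` : starting from the partial proper coloring `c` of `G`,
with `turn = true` meaning that it is Alice's move (`turn = false` : Bob's move),
Alice can force the `k`-coloring game to end with every vertex colored. -/
inductive AliceWins {V : Type*} [DecidableEq V] (G : SimpleGraph V) (k : ℕ) :
    Bool → (V → Option (Fin k)) → Prop
  | finished (turn : Bool) (c : V → Option (Fin k)) (h : allColored c) :
      AliceWins G k turn c
  | aliceMove (c : V → Option (Fin k)) (v : V) (col : Fin k)
      (hm : validMove G c v col)
      (h : AliceWins G k false (Function.update c v (some col))) :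
      AliceWins G k true c
  | bobTurn (c : V → Option (Fin k))
      (hne : ∃ v col, validMove G c v col)
      (h : ∀ v col, validMove G c v col →
        AliceWins G k true (Function.update c v (some col))) :
      AliceWins G k false c

/-- `BobWins G k turn c` : starting from the partial proper coloring `c` of `G`,
with `turn = true` meaning that it is Alice's move (`turn = false` : Bob's move),
Bob can force the `k`-coloring game to end with some vertex left uncolored. -/
inductive BobWins {V : Type*} [DecidableEq V] (G : SimpleGraph V) (k : ℕ) :
    Bool → (V → Option (Fin k)) → Prop
  | aliceTurn (c : V → Option (Fin k)) (h0 : ¬ allColored c)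
      (h : ∀ v col, validMove G c v col →
        BobWins G k false (Function.update c v (some col))) :
      BobWins G k true c
  | bobMove (c : V → Option (Fin k)) (v : V) (col : Fin k)
      (hm : validMove G c v col)
      (h : BobWins G k true (Function.update c v (some col))) :
      BobWins G k false c
  | bobStuck (c : V → Option (Fin k)) (h0 : ¬ allColored c)
      (h : ∀ v col, ¬ validMove G c v col) :
      BobWins G k false c

/-- The game chromatic number: the least `k` such that Alice has a winning strategy
in the `k`-coloring game on `G` (Alice moves first), starting from the empty coloring. -/
noncomputable def gameChromaticNumber {V : Type*} [DecidableEq V] (G : SimpleGraph V) : ℕ :=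
  sInf {k | AliceWins G k true (fun _ => none)}

/-- The Bob-start game chromatic number: the least `k` such that Alice has a winning
strategy in the `k`-coloring game on `G` in which Bob moves first. -/
noncomputable def bobStartGameChromaticNumber {V : Type*} [DecidableEq V]
    (G : SimpleGraph V) : ℕ :=
  sInf {k | AliceWins G k false (fun _ => none)}

/-!
Bob opens by coloring `a = (1, 0)` with color `0`, so that all neighbours of `a` see `0`.
A fork is a vertex `p` adjacent to two neighbours `u₁, u₂` of `a`, together with neighbours
`tᵢ` of `uᵢ`: once Bob colors `p` with `1`, each `uᵢ` sees `0` and `1`, and coloring `tᵢ` with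
`2` would leave `uᵢ` uncolorable. A move of Alice defuses such a threat only if it lies in its
zone (`uᵢ`, `tᵢ` or a neighbour of `tᵢ`), and the two zones of a fork are disjoint, so Bob wins
as soon as Alice's first move avoids some fork; three forks suffice to cover all her answers.
With `k ≤ 2` colors Bob's threats arise without a fork, and Alice wins with `5` colors since
every vertex has degree at most `4`, so the infimum defining `χ_g^B` is at least `4`.
-/

section ColoringGame

variable {V : Type*} {G : SimpleGraph V} {k : ℕ} {c : V → Option (Fin k)} {u v t p : V}
  {x col : Fin k}

theorem validMove_empty : validMove G (fun _ => none) v x :=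
  ⟨rfl, fun _ _ => nofun⟩

theorem exists_validMove_of_degree_lt [Fintype (G.neighborSet u)] (hu : c u = none)
    (hdeg : G.degree u < k) : ∃ col, validMove G c u col := by
  by_contra! hblocked
  have hsub : ∀ col ∈ (Finset.univ : Finset (Fin k)),
      some col ∈ (G.neighborFinset u).image c := by
    intro col _
    obtain ⟨w, hw, hcw⟩ : ∃ w, G.Adj w u ∧ c w = some col := by
      by_contra! h
      exact hblocked col ⟨hu, h⟩
    exact Finset.mem_image.mpr ⟨w, by simpa [G.adj_comm] using hw, hcw⟩
  obtain ⟨a, -, b, -, hab, heq⟩ := Finset.exists_ne_map_eq_of_card_lt_of_maps_to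
    (by simpa using (Finset.card_image_le).trans_lt hdeg) hsub
  exact hab (Option.some_injective _ heq)

def uncolored [Fintype V] (c : V → Option (Fin k)) : Finset V :=
  {v | c v = none}

def IsDead (G : SimpleGraph V) (c : V → Option (Fin k)) (u : V) : Prop :=
  c u = none ∧ ∀ col, ¬validMove G c u col

/-- Bob threatens to leave `u` without a color by coloring its neighbour `t` with `col`. -/
structure IsThreat (G : SimpleGraph V) (c : V → Option (Fin k)) (u t : V) (col : Fin k) :
    Prop where
  u_none : c u = none
  adj : G.Adj t u
  valid : validMove G c t col
  blocked : ∀ col', col' ≠ col → ¬validMove G c u col'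

def threatZone (G : SimpleGraph V) (u t : V) : Set V :=
  {w | w = u ∨ w = t ∨ G.Adj w t}

theorem notMem_threatZone : v ∉ threatZone G u t ↔ v ≠ u ∧ v ≠ t ∧ ¬G.Adj v t := by
  simp [threatZone, not_or]

variable [DecidableEq V]

theorem card_uncolored_update_lt [Fintype V] (hv : c v = none) (x : Fin k) :
    (uncolored (Function.update c v (some x))).card < (uncolored c).card := by
  have : uncolored (Function.update c v (some x)) = (uncolored c).erase v := by
    ext w
    by_cases hw : w = v <;> simp [uncolored, Function.update_apply, hw]
  rw [this]
  exact Finset.card_erase_lt_of_mem (by simpa [uncolored] using hv)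

theorem ne_of_validMove_update {a : V} (h : validMove G (Function.update c a (some x)) v col) :
    v ≠ a := by
  rintro rfl
  simpa using h.1

theorem validMove.update (h : validMove G c t col) (hvt : v ≠ t) (hx : G.Adj v t → x ≠ col) :
    validMove G (Function.update c v (some x)) t col := by
  refine ⟨by rw [Function.update_of_ne hvt.symm]; exact h.1, fun w hw => ?_⟩
  rcases eq_or_ne w v with rfl | hwv
  · simpa using hx hw
  · rw [Function.update_of_ne hwv]
    exact h.2 w hw

theorem not_validMove_update (hv : c v = none) (h : ¬validMove G c u col) :
    ¬validMove G (Function.update c v (some x)) u col := by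
  rintro ⟨hu, hnbr⟩
  have huv : u ≠ v := by
    rintro rfl
    simp at hu
  refine h ⟨by rwa [Function.update_of_ne huv] at hu, fun w hw hcw => ?_⟩
  have hwv : w ≠ v := by
    rintro rfl
    simp [hv] at hcw
  exact hnbr w hw (by rwa [Function.update_of_ne hwv])

theorem IsDead.update (h : IsDead G c u) (hv : validMove G c v x) :
    IsDead G (Function.update c v (some x)) u := by
  have huv : u ≠ v := by
    rintro rfl
    exact h.2 x hv
  exact ⟨by rw [Function.update_of_ne huv]; exact h.1,
    fun col => not_validMove_update hv.1 (h.2 col)⟩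

theorem bobWins_of_isDead [Fintype V] {c : V → Option (Fin k)} (h : IsDead G c u) (turn : Bool) :
    BobWins G k turn c := by
  have hnot : ¬allColored c := fun hc => hc u h.1
  cases turn with
  | false =>
    by_cases hmove : ∃ v x, validMove G c v x
    · obtain ⟨v, x, hvx⟩ := hmove
      exact .bobMove c v x hvx (bobWins_of_isDead (h.update hvx) true)
    · exact .bobStuck c hnot fun v x hvx => hmove ⟨v, x, hvx⟩
  | true => exact .aliceTurn c hnot fun v x hvx => bobWins_of_isDead (h.update hvx) false
termination_by (uncolored c).card
decreasing_by all_goals exact card_uncolored_update_lt hvx.1 x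

theorem IsThreat.update (h : IsThreat G c u t col) (hv : validMove G c v x)
    (hvz : v ∉ threatZone G u t) : IsThreat G (Function.update c v (some x)) u t col := by
  obtain ⟨hvu, hvt, hvadj⟩ := notMem_threatZone.mp hvz
  exact ⟨by rw [Function.update_of_ne (Ne.symm hvu)]; exact h.u_none, h.adj,
    h.valid.update hvt fun hadj => absurd hadj hvadj,
    fun col' hcol' => not_validMove_update hv.1 (h.blocked col' hcol')⟩

theorem IsThreat.isDead_update (h : IsThreat G c u t col) :
    IsDead G (Function.update c t (some col)) u := by
  refine ⟨by rw [Function.update_of_ne h.adj.ne.symm]; exact h.u_none, fun col' => ?_⟩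
  rcases eq_or_ne col' col with rfl | hcol'
  · exact fun hm => hm.2 t h.adj (Function.update_self _ _ _)
  · exact not_validMove_update h.valid.1 (h.blocked col' hcol')

theorem IsThreat.bobWins [Fintype V] (h : IsThreat G c u t col) : BobWins G k false c :=
  .bobMove c t col h.valid (bobWins_of_isDead h.isDead_update true)

theorem bobWins_of_disjoint_threats [Fintype V] {u₁ t₁ u₂ t₂ : V} {col₁ col₂ : Fin k}
    (h₁ : IsThreat G c u₁ t₁ col₁) (h₂ : IsThreat G c u₂ t₂ col₂)
    (hdisj : Disjoint (threatZone G u₁ t₁) (threatZone G u₂ t₂)) : BobWins G k true c := by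
  refine .aliceTurn c (fun hc => hc u₁ h₁.u_none) fun v x hvx => ?_
  by_cases hv : v ∈ threatZone G u₁ t₁
  · exact (h₂.update hvx (Set.disjoint_left.mp hdisj hv)).bobWins
  · exact (h₁.update hvx hv).bobWins

theorem isThreat_update_of_adj {b : Fin k} (hp : validMove G c p b) (hpu : G.Adj p u)
    (hu : c u = none) (htu : G.Adj t u) (ht : validMove G c t col) (htp : t ≠ p) (hb : b ≠ col)
    (hblocked : ∀ col', col' ≠ col → col' ≠ b → ¬validMove G c u col') :
    IsThreat G (Function.update c p (some b)) u t col := by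
  refine ⟨by rw [Function.update_of_ne hpu.ne.symm]; exact hu, htu,
    ht.update htp.symm fun _ => hb, fun col' hcol' => ?_⟩
  rcases eq_or_ne col' b with rfl | hb'
  · exact fun hm => hm.2 p hpu (Function.update_self _ _ _)
  · exact not_validMove_update hp.1 (hblocked col' hcol' hb')

theorem AliceWins.not_bobWins {turn : Bool} (hA : AliceWins G k turn c) : ¬BobWins G k turn c := by
  induction hA with
  | finished turn c h =>
    intro hB
    cases hB with
    | aliceTurn _ h0 _ => exact h0 h
    | bobMove _ v _ hm _ => exact h v hm.1
    | bobStuck _ h0 _ => exact h0 h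
  | aliceMove c v col hm _ ih =>
    intro hB
    cases hB with
    | aliceTurn _ _ hB => exact ih (hB v col hm)
  | bobTurn c hne _ ih =>
    intro hB
    cases hB with
    | bobMove _ v col hm hB => exact ih v col hm hB
    | bobStuck _ _ hstuck =>
      obtain ⟨v, col, hv⟩ := hne
      exact hstuck v col hv

theorem aliceWins_of_degree_lt [Fintype V] [G.LocallyFinite] (hdeg : ∀ v, G.degree v < k)
    (turn : Bool) {c : V → Option (Fin k)} : AliceWins G k turn c := by
  by_cases hall : allColored c
  · exact .finished turn c hall
  obtain ⟨u, hu⟩ : ∃ u, c u = none := by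
    by_contra! h
    exact hall h
  obtain ⟨col, hcol⟩ := exists_validMove_of_degree_lt hu (hdeg u)
  cases turn with
  | false => exact .bobTurn c ⟨u, col, hcol⟩ fun v x hvx => aliceWins_of_degree_lt hdeg true
  | true => exact .aliceMove c u col hcol (aliceWins_of_degree_lt hdeg false)
termination_by (uncolored c).card
decreasing_by
  · exact card_uncolored_update_lt hvx.1 x
  · exact card_uncolored_update_lt hu col

/-- Coloring `p` is meant to create a threat on `u₁` through `t₁` and one on `u₂` through `t₂`. -/
structure Fork (V : Type*) where
  p : V
  u₁ : V
  t₁ : V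
  u₂ : V
  t₂ : V

structure IsFork (G : SimpleGraph V) (F : Fork V) : Prop where
  adj_p₁ : G.Adj F.p F.u₁
  adj_p₂ : G.Adj F.p F.u₂
  adj_t₁ : G.Adj F.t₁ F.u₁
  adj_t₂ : G.Adj F.t₂ F.u₂
  t₁_ne_p : F.t₁ ≠ F.p
  t₂_ne_p : F.t₂ ≠ F.p
  disjoint : Disjoint (threatZone G F.u₁ F.t₁) (threatZone G F.u₂ F.t₂)

structure IsForkAround (G : SimpleGraph V) (F : Fork V) (a : V) : Prop extends IsFork G F where
  adj_a₁ : G.Adj a F.u₁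
  adj_a₂ : G.Adj a F.u₂
  p_ne_a : F.p ≠ a
  t₁_ne_a : F.t₁ ≠ a
  t₂_ne_a : F.t₂ ≠ a

def Fork.Avoids (G : SimpleGraph V) (F : Fork V) (v : V) : Prop :=
  v ≠ F.p ∧ ¬G.Adj v F.p ∧ v ∉ threatZone G F.u₁ F.t₁ ∧ v ∉ threatZone G F.u₂ F.t₂

theorem IsFork.bobWins_two [Fintype V] {F : Fork V} (hF : IsFork G F) :
    BobWins G 2 false (fun _ => none) := by
  have threat : ∀ {u t}, G.Adj F.p u → G.Adj t u → t ≠ F.p →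
      IsThreat G (Function.update (fun _ => none : V → Option (Fin 2)) F.p (some 0)) u t 1 :=
    fun hpu htu htp => isThreat_update_of_adj validMove_empty hpu rfl htu validMove_empty htp
      (by decide) fun col' h₁ h₀ => absurd (by omega : col' = 0) h₀
  exact .bobMove _ F.p 0 validMove_empty <| bobWins_of_disjoint_threats
    (threat hF.adj_p₁ hF.adj_t₁ hF.t₁_ne_p) (threat hF.adj_p₂ hF.adj_t₂ hF.t₂_ne_p) hF.disjoint

theorem IsForkAround.bobWins_three [Fintype V] {F : Fork V} {a v : V} {cv : Fin 3}
    (hF : IsForkAround G F a) (hv : validMove G (Function.update (fun _ => none) a (some 0)) v cv)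
    (havoid : F.Avoids G v) :
    BobWins G 3 false
      (Function.update (Function.update (fun _ => none) a (some 0)) v (some cv)) := by
  obtain ⟨hvp, hvadjp, hv₁, hv₂⟩ := havoid
  set c := Function.update (Function.update (fun _ => none) a (some 0)) v (some cv)
  have hva : v ≠ a := ne_of_validMove_update hv
  have valid : ∀ {w} {col : Fin 3}, w ≠ a → col ≠ 0 → w ≠ v → ¬G.Adj v w → validMove G c w col :=
    fun hwa hcol hwv hvw =>
      (validMove_empty.update hwa.symm fun _ => hcol.symm).update hwv.symm fun h => absurd h hvw
  have hp : validMove G c F.p 1 := valid hF.p_ne_a (by decide) hvp.symm hvadjp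
  have threat : ∀ {u t}, G.Adj a u → G.Adj F.p u → G.Adj t u → t ≠ a → t ≠ F.p →
      v ∉ threatZone G u t → IsThreat G (Function.update c F.p (some 1)) u t 2 := by
    intro u t hau hpu htu hta htp hvz
    obtain ⟨hvu, hvt, hvadjt⟩ := notMem_threatZone.mp hvz
    refine isThreat_update_of_adj hp hpu (by simp [c, hvu.symm, hau.ne.symm]) htu
      (valid hta (by decide) hvt.symm hvadjt) htp (by decide) fun col' h₂ h₁ hm => hm.2 a hau ?_
    have : col' = 0 := by omega
    simp [c, this, hva.symm]
  exact .bobMove c F.p 1 hp <| bobWins_of_disjoint_threats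
    (threat hF.adj_a₁ hF.adj_p₁ hF.adj_t₁ hF.t₁_ne_a hF.t₁_ne_p hv₁)
    (threat hF.adj_a₂ hF.adj_p₂ hF.adj_t₂ hF.t₂_ne_a hF.t₂_ne_p hv₂) hF.disjoint

end ColoringGame

theorem cycleGraph_adj_iff_val {n : ℕ} (hn : 2 ≤ n) {x y : Fin n} :
    (cycleGraph n).Adj x y ↔ x.val + 1 = y.val ∨ y.val + 1 = x.val ∨
      (x.val + 1 = n ∧ y.val = 0) ∨ (y.val + 1 = n ∧ x.val = 0) := by
  have hsub : ∀ a b : Fin n, (a - b).val = 1 ↔ a.val = b.val + 1 ∨ (a.val = 0 ∧ b.val + 1 = n) := by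
    intro a b
    rcases le_or_gt b a with hba | hab
    · rw [Fin.coe_sub_iff_le.mpr hba]
      have := Fin.le_def.mp hba
      omega
    · rw [Fin.coe_sub_iff_lt.mpr hab]
      have := Fin.lt_def.mp hab
      omega
  rw [cycleGraph_adj', hsub, hsub]
  omega

section Cylinder

variable {n k : ℕ}

/- Vertices are `(row, column)` with row `0` on top; Bob opens at `(1, 0)`, and the suffix of a
fork's name gives the direction from there to its vertex `p`. -/
def cylinderForkNE (hn : 5 ≤ n) : Fork (Fin 4 × Fin n) :=
  ⟨(0, ⟨1, by omega⟩), (0, ⟨0, by omega⟩), (0, ⟨n - 1, by omega⟩), (1, ⟨1, by omega⟩),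
    (1, ⟨2, by omega⟩)⟩

def cylinderForkSE (hn : 5 ≤ n) : Fork (Fin 4 × Fin n) :=
  ⟨(2, ⟨1, by omega⟩), (2, ⟨0, by omega⟩), (3, ⟨0, by omega⟩), (1, ⟨1, by omega⟩),
    (0, ⟨1, by omega⟩)⟩

def cylinderForkSW (hn : 5 ≤ n) : Fork (Fin 4 × Fin n) :=
  ⟨(2, ⟨n - 1, by omega⟩), (2, ⟨0, by omega⟩), (3, ⟨0, by omega⟩), (1, ⟨n - 1, by omega⟩),
    (1, ⟨n - 2, by omega⟩)⟩

theorem isForkAround_cylinderForkNE (hn : 5 ≤ n) :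
    IsForkAround (pathGraph 4 □ cycleGraph n) (cylinderForkNE hn) (1, ⟨0, by omega⟩) := by
  refine ⟨⟨?_, ?_, ?_, ?_, ?_, ?_, ?_⟩, ?_, ?_, ?_, ?_, ?_⟩ <;>
    simp only [cylinderForkNE, Set.disjoint_left, threatZone, Set.mem_ofPred_eq, boxProd_adj,
      pathGraph_adj, cycleGraph_adj_iff_val (by omega : 2 ≤ n), Prod.forall, Prod.ext_iff,
      Fin.ext_iff, Fin.forall_iff, Fin.coe_ofNat_eq_mod, ne_eq, true_or, or_true, and_true,
      true_and] <;> omega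

theorem isForkAround_cylinderForkSE (hn : 5 ≤ n) :
    IsForkAround (pathGraph 4 □ cycleGraph n) (cylinderForkSE hn) (1, ⟨0, by omega⟩) := by
  refine ⟨⟨?_, ?_, ?_, ?_, ?_, ?_, ?_⟩, ?_, ?_, ?_, ?_, ?_⟩ <;>
    simp only [cylinderForkSE, Set.disjoint_left, threatZone, Set.mem_ofPred_eq, boxProd_adj,
      pathGraph_adj, cycleGraph_adj_iff_val (by omega : 2 ≤ n), Prod.forall, Prod.ext_iff,
      Fin.ext_iff, Fin.forall_iff, Fin.coe_ofNat_eq_mod, ne_eq, true_or, or_true, and_true] <;>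
    omega

theorem isForkAround_cylinderForkSW (hn : 5 ≤ n) :
    IsForkAround (pathGraph 4 □ cycleGraph n) (cylinderForkSW hn) (1, ⟨0, by omega⟩) := by
  refine ⟨⟨?_, ?_, ?_, ?_, ?_, ?_, ?_⟩, ?_, ?_, ?_, ?_, ?_⟩ <;>
    simp only [cylinderForkSW, Set.disjoint_left, threatZone, Set.mem_ofPred_eq, boxProd_adj,
      pathGraph_adj, cycleGraph_adj_iff_val (by omega : 2 ≤ n), Prod.forall, Prod.ext_iff,
      Fin.ext_iff, Fin.forall_iff, Fin.coe_ofNat_eq_mod, ne_eq, true_or, or_true, and_true,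
      true_and] <;> omega

theorem cylinderFork_avoids_of_ne (hn : 5 ≤ n) {v : Fin 4 × Fin n} (hv : v ≠ (1, ⟨0, by omega⟩)) :
    (cylinderForkNE hn).Avoids (pathGraph 4 □ cycleGraph n) v ∨
      (cylinderForkSE hn).Avoids (pathGraph 4 □ cycleGraph n) v ∨
      (cylinderForkSW hn).Avoids (pathGraph 4 □ cycleGraph n) v := by
  obtain ⟨⟨i, hi⟩, ⟨j, hj⟩⟩ := v
  simp only [Fork.Avoids, cylinderForkNE, cylinderForkSE, cylinderForkSW, notMem_threatZone,
    boxProd_adj, pathGraph_adj, cycleGraph_adj_iff_val (by omega : 2 ≤ n), Prod.ext_iff,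
    Fin.ext_iff, Fin.coe_ofNat_eq_mod, ne_eq] at hv ⊢
  omega

theorem bobWins_cylinder_three (hn : 5 ≤ n) :
    BobWins (pathGraph 4 □ cycleGraph n) 3 false (fun _ => none) := by
  refine .bobMove _ (1, ⟨0, by omega⟩) 0 validMove_empty (.aliceTurn _ ?_ fun v cv hv => ?_)
  · exact fun h => h (0, ⟨0, by omega⟩) (by simp)
  rcases cylinderFork_avoids_of_ne hn (ne_of_validMove_update hv) with h | h | h
  exacts [(isForkAround_cylinderForkNE hn).bobWins_three hv h,
    (isForkAround_cylinderForkSE hn).bobWins_three hv h,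
    (isForkAround_cylinderForkSW hn).bobWins_three hv h]

theorem bobWins_cylinder (hn : 5 ≤ n) (hk : k ≤ 3) :
    BobWins (pathGraph 4 □ cycleGraph n) k false (fun _ => none) := by
  interval_cases k
  · exact .bobStuck _ (fun h => h (0, ⟨0, by omega⟩) rfl) fun _ col => col.elim0
  · refine IsThreat.bobWins (u := (0, ⟨0, by omega⟩)) (t := (1, ⟨0, by omega⟩)) (col := 0)
      ⟨rfl, by simp [boxProd_adj, pathGraph_adj], validMove_empty, fun col h => ?_⟩
    exact absurd (Subsingleton.elim col 0) h
  · exact (isForkAround_cylinderForkSE hn).bobWins_two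
  · exact bobWins_cylinder_three hn

theorem cylinder_degree_le (hn : 3 ≤ n) (x : Fin 4 × Fin n)
    [Fintype ((pathGraph 4 □ cycleGraph n).neighborSet x)] :
    (pathGraph 4 □ cycleGraph n).degree x ≤ 4 := by
  classical
  obtain ⟨m, rfl⟩ : ∃ m, n = m + 3 := ⟨n - 3, by omega⟩
  have hpath : (pathGraph 4).degree x.1 ≤ (cycleGraph 4).degree x.1 :=
    degree_le_of_le pathGraph_le_cycleGraph
  rw [degree_boxProd, cycleGraph_degree_three_le]
  rw [cycleGraph_degree_three_le] at hpath
  omega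

end Cylinder

/-- For every `n ≥ 9`, Bob has a winning strategy in the Bob-start
`3`-coloring game on the `4 × n` cylinder graph `P₄ □ Cₙ`; consequently
`χ_g^B(P₄ □ Cₙ) ≥ 4`. -/
theorem four_le_bobStartGameChromaticNumber_cylinder (n : ℕ) (hn : 9 ≤ n) :
    BobWins (pathGraph 4 □ cycleGraph n) 3 false (fun _ => none) ∧
      4 ≤ bobStartGameChromaticNumber (pathGraph 4 □ cycleGraph n) := by
  have hAlice : AliceWins (pathGraph 4 □ cycleGraph n) 5 false (fun _ => none) := by
    classical
    exact aliceWins_of_degree_lt (fun x => (cylinder_degree_le (by omega) x).trans_lt (by norm_num))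
      false
  refine ⟨bobWins_cylinder (by omega) le_rfl, le_csInf ⟨5, hAlice⟩ fun k hk => ?_⟩
  by_contra! hk4
  exact hk.not_bobWins (bobWins_cylinder (by omega) (by omega))
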